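/- arXiv:1211.2750 — 3 statements merged into one kernel-verified Lean document; each statement's English description precedes it below -/
import Mathlib

section
/- Let a < b, let h be a nonnegative function on an interval J ⊇ [0,1], let f, g : [a,b] → ℝ be positive h-logarithmically convex functions with fg integrable on [a,b], and let α, β > 0 with α + β = 1. If the function t ↦ α·[f(a)g(a)]^{h(t)/α} + β·[f(b)g(b)]^{h(1-t)/β} is integrable on [0,1], then (1/(b-a)) ∫_a^b f(x)g(x) dx ≤ ∫_0^1 { α·[f(a)g(a)]^{h(t)/α} + β·[f(b)g(b)]^{h(1-t)/β} } dt. -/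
/-!
The substitution `x = t a + (1 - t) b` turns the mean value of `f g` over `[a, b]` into
`∫₀¹ (f g)(t a + (1 - t) b) dt`. The product `f g` is again `h`-log-convex, so the integrand is at
most `(f(a) g(a))^{h(t)} (f(b) g(b))^{h(1-t)}`, and Young's inequality bounds this product by the
integrand on the right.
-/

open Set MeasureTheory

def HLogConvexOn (h : ℝ → ℝ) (s : Set ℝ) (f : ℝ → ℝ) : Prop :=
  ∀ x ∈ s, ∀ y ∈ s, ∀ t ∈ Icc (0:ℝ) 1, f (t * x + (1 - t) * y) ≤ f x ^ h t * f y ^ h (1 - t)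

theorem HLogConvexOn.mul {h f g : ℝ → ℝ} {s : Set ℝ} (hs : Convex ℝ s)
    (hf : HLogConvexOn h s f) (hg : HLogConvexOn h s g)
    (hf₀ : ∀ x ∈ s, 0 ≤ f x) (hg₀ : ∀ x ∈ s, 0 ≤ g x) :
    HLogConvexOn h s (f * g) := by
  intro x hx y hy t ht
  have hz : t * x + (1 - t) * y ∈ s :=
    hs hx hy ht.1 (sub_nonneg.2 ht.2) (add_sub_cancel t 1)
  calc f (t * x + (1 - t) * y) * g (t * x + (1 - t) * y)
      ≤ (f x ^ h t * f y ^ h (1 - t)) * (g x ^ h t * g y ^ h (1 - t)) :=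
        mul_le_mul (hf x hx y hy t ht) (hg x hx y hy t ht) (hg₀ _ hz) (by
          have := hf₀ x hx; have := hf₀ y hy; positivity)
    _ = (f x * g x) ^ h t * (f y * g y) ^ h (1 - t) := by
        rw [Real.mul_rpow (hf₀ x hx) (hg₀ x hx), Real.mul_rpow (hf₀ y hy) (hg₀ y hy)]
        ring

theorem mul_le_weighted_add_rpow_inv {c d α β : ℝ} (hc : 0 ≤ c) (hd : 0 ≤ d)
    (hα : 0 < α) (hβ : 0 < β) (hαβ : α + β = 1) :
    c * d ≤ α * c ^ (1 / α) + β * d ^ (1 / β) := by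
  have hconj : (1 / α).HolderConjugate (1 / β) :=
    ⟨by simpa only [one_div, inv_inv, inv_one] using hαβ, by positivity, by positivity⟩
  simpa only [one_div, div_inv_eq_mul, mul_comm]
    using Real.young_inequality_of_nonneg hc hd hconj

theorem integral_comp_convexComb {F : ℝ → ℝ} {a b : ℝ} (hab : a ≠ b) :
    ∫ t in (0:ℝ)..1, F (t * a + (1 - t) * b) = (1 / (b - a)) * ∫ x in a..b, F x := by
  have hab' : a - b ≠ 0 := sub_ne_zero.2 hab
  simp_rw [show ∀ t : ℝ, t * a + (1 - t) * b = (a - b) * t + b by intro t; ring]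
  rw [intervalIntegral.integral_comp_mul_add _ hab', intervalIntegral.integral_symm, smul_eq_mul]
  simp only [mul_one, mul_zero, sub_add_cancel, zero_add]
  rw [← neg_sub b a, inv_neg]
  ring

theorem IntervalIntegrable.comp_convexComb {F : ℝ → ℝ} {a b : ℝ} (hab : a ≠ b)
    (hF : IntervalIntegrable F volume a b) :
    IntervalIntegrable (fun t => F (t * a + (1 - t) * b)) volume 0 1 := by
  have hab' : a - b ≠ 0 := sub_ne_zero.2 hab
  have := (hF.comp_add_right b).comp_mul_left (c := a - b)
  rw [sub_self, zero_div, div_self hab'] at this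
  simpa only [show ∀ t : ℝ, t * a + (1 - t) * b = (a - b) * t + b by intro t; ring]
    using this.symm

theorem h_log_convex_product_young_split'_general
    (a b : ℝ) (hab : a < b) (h f g : ℝ → ℝ) (α β : ℝ)
    (hα : 0 < α) (hβ : 0 < β) (hαβ : α + β = 1)
    (hf : ∀ x ∈ Icc a b, 0 < f x)
    (hg : ∀ x ∈ Icc a b, 0 < g x)
    (hlcf : ∀ x ∈ Icc a b, ∀ y ∈ Icc a b, ∀ t ∈ Icc (0:ℝ) 1,
      f (t * x + (1 - t) * y) ≤ f x ^ h t * f y ^ h (1 - t))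
    (hlcg : ∀ x ∈ Icc a b, ∀ y ∈ Icc a b, ∀ t ∈ Icc (0:ℝ) 1,
      g (t * x + (1 - t) * y) ≤ g x ^ h t * g y ^ h (1 - t))
    (hint1 : IntervalIntegrable (fun x => f x * g x) volume a b)
    (hint2 : IntervalIntegrable
      (fun t => α * (f a * g a) ^ (h t / α) + β * (f b * g b) ^ (h (1 - t) / β))
      volume 0 1) :
    (1 / (b - a)) * ∫ x in a..b, f x * g x ≤
      ∫ t in (0:ℝ)..1,
        (α * (f a * g a) ^ (h t / α) + β * (f b * g b) ^ (h (1 - t) / β)) := by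
  have ha : a ∈ Icc a b := left_mem_Icc.2 hab.le
  have hb : b ∈ Icc a b := right_mem_Icc.2 hab.le
  have hfg : HLogConvexOn h (Icc a b) (f * g) :=
    HLogConvexOn.mul (convex_Icc a b) hlcf hlcg (fun x hx => (hf x hx).le)
      (fun x hx => (hg x hx).le)
  rw [← integral_comp_convexComb hab.ne]
  refine intervalIntegral.integral_mono_on zero_le_one (hint1.comp_convexComb hab.ne) hint2
    fun t ht => ?_
  have hab₀ : 0 ≤ f a * g a := (mul_pos (hf a ha) (hg a ha)).le
  have hbb₀ : 0 ≤ f b * g b := (mul_pos (hf b hb) (hg b hb)).le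
  calc f (t * a + (1 - t) * b) * g (t * a + (1 - t) * b)
      ≤ (f a * g a) ^ h t * (f b * g b) ^ h (1 - t) := hfg a ha b hb t ht
    _ ≤ α * ((f a * g a) ^ h t) ^ (1 / α) + β * ((f b * g b) ^ h (1 - t)) ^ (1 / β) :=
        mul_le_weighted_add_rpow_inv (by positivity) (by positivity) hα hβ hαβ
    _ = α * (f a * g a) ^ (h t / α) + β * (f b * g b) ^ (h (1 - t) / β) := by
        rw [← Real.rpow_mul hab₀, ← Real.rpow_mul hbb₀, mul_one_div, mul_one_div]

/-- Second Young-type bound for the product of two positive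
`h`-logarithmically convex functions on `[a,b]`. -/
theorem h_log_convex_product_young_split'
    (a b : ℝ) (hab : a < b) (h f g : ℝ → ℝ) (α β : ℝ)
    (hα : 0 < α) (hβ : 0 < β) (hαβ : α + β = 1)
    (hh : ∀ t ∈ Icc (0:ℝ) 1, 0 ≤ h t)
    (hf : ∀ x ∈ Icc a b, 0 < f x)
    (hg : ∀ x ∈ Icc a b, 0 < g x)
    (hlcf : ∀ x ∈ Icc a b, ∀ y ∈ Icc a b, ∀ t ∈ Icc (0:ℝ) 1,
      f (t * x + (1 - t) * y) ≤ f x ^ h t * f y ^ h (1 - t))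
    (hlcg : ∀ x ∈ Icc a b, ∀ y ∈ Icc a b, ∀ t ∈ Icc (0:ℝ) 1,
      g (t * x + (1 - t) * y) ≤ g x ^ h t * g y ^ h (1 - t))
    (hint1 : IntervalIntegrable (fun x => f x * g x) volume a b)
    (hint2 : IntervalIntegrable
      (fun t => α * (f a * g a) ^ (h t / α) + β * (f b * g b) ^ (h (1 - t) / β))
      volume 0 1) :
    (1 / (b - a)) * ∫ x in a..b, f x * g x ≤
      ∫ t in (0:ℝ)..1,
        (α * (f a * g a) ^ (h t / α) + β * (f b * g b) ^ (h (1 - t) / β)) :=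
  h_log_convex_product_young_split'_general a b hab h f g α β hα hβ hαβ hf hg hlcf hlcg hint1 hint2
end

section
/- Let I ⊂ (0,∞) be an interval, let h be a nonnegative function on an interval J ⊇ [0,1], and let f, g : I → (0,∞) be h-geometrically convex functions. Let x, y ∈ I with 0 < x < y, let p > 1 and q satisfy 1/p + 1/q = 1, and assume the functions t ↦ f(x^t y^{1-t})·g(x^{1-t} y^t), t ↦ f(x)^{p²h(t)}, t ↦ g(y)^{pq·h(t)}, t ↦ f(y)^{pq·h(1-t)}, and t ↦ g(x)^{q²h(1-t)} are integrable on [0,1]. Then ∫_0^1 f(x^t y^{1-t}) · g(x^{1-t} y^t) dt ≤ (∫_0^1 f(x)^{p²h(t)} dt)^{1/p²} · (∫_0^1 g(y)^{pq·h(t)} dt)^{1/(pq)} · (∫_0^1 f(y)^{pq·h(1-t)} dt)^{1/(pq)} · (∫_0^1 g(x)^{q²h(1-t)} dt)^{1/q²}. -/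
/-!
By `h`-geometric convexity the integrand is bounded pointwise by `(A B) (C D)`, where
`A = f(x)^{h(t)}`, `B = g(y)^{h(t)}`, `C = f(y)^{h(1-t)}` and `D = g(x)^{h(1-t)}`. Hölder with
exponents `p, q` bounds `∫ (A B) (C D)` by `‖A B‖_p ‖C D‖_q`, and since `1/p = 1/p² + 1/(pq)` and
`1/q = 1/(pq) + 1/q²`, the generalised Hölder inequality gives `‖A B‖_p ≤ ‖A‖_{p²} ‖B‖_{pq}` and
`‖C D‖_q ≤ ‖C‖_{pq} ‖D‖_{q²}`.
-/

open Set MeasureTheory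

section Holder

variable {α : Type*} [MeasurableSpace α] {μ : Measure α} {F G : α → ℝ}

theorem memLp_ofReal_iff_integrable_rpow {P : ℝ} (hP : 0 < P) (hF : 0 ≤ᵐ[μ] F) :
    MemLp F (ENNReal.ofReal P) μ ↔ Integrable (fun a => F a ^ P) μ := by
  have hnorm : (fun a => ‖F a‖ ^ (ENNReal.ofReal P).toReal) =ᵐ[μ] fun a => F a ^ P := by
    filter_upwards [hF] with a ha
    rw [Real.norm_of_nonneg ha, ENNReal.toReal_ofReal hP.le]
  refine ⟨fun hFm => ?_, fun hi => ?_⟩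
  · exact ((integrable_norm_rpow_iff hFm.1 (by simpa using hP) ENNReal.ofReal_ne_top).2
      hFm).congr hnorm
  · have hmeas : AEStronglyMeasurable F μ := by
      refine ((Real.continuous_rpow_const (one_div_pos.2 hP).le).comp_aestronglyMeasurable
        hi.aestronglyMeasurable).congr ?_
      filter_upwards [hF] with a ha
      simp [← Real.rpow_mul ha, hP.ne']
    exact (integrable_norm_rpow_iff hmeas (by simpa using hP) ENNReal.ofReal_ne_top).1
      (hi.congr hnorm.symm)

/-- Hölder with the conjugate exponents `P / r`, `Q / r`, applied to `F ^ r` and `G ^ r`. -/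
theorem integral_mul_rpow_le {P Q r : ℝ} (hPQr : P.HolderTriple Q r) (hF : 0 ≤ᵐ[μ] F)
    (hG : 0 ≤ᵐ[μ] G) (hFm : MemLp F (ENNReal.ofReal P) μ) (hGm : MemLp G (ENNReal.ofReal Q) μ) :
    (∫ a, (F a * G a) ^ r ∂μ) ^ (1 / r) ≤
      (∫ a, F a ^ P ∂μ) ^ (1 / P) * (∫ a, G a ^ Q ∂μ) ^ (1 / Q) := by
  obtain ⟨hP, hQ, hr⟩ := hPQr.all_pos
  have rpow_ae_nonneg : ∀ {H : α → ℝ} (S : ℝ), 0 ≤ᵐ[μ] H → 0 ≤ᵐ[μ] fun a => H a ^ S :=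
    fun S hH => by filter_upwards [hH] with a ha using Real.rpow_nonneg ha S
  have rpow_rpow_div : ∀ {H : α → ℝ} {S : ℝ}, 0 ≤ᵐ[μ] H →
      (fun a => (H a ^ r) ^ (S / r)) =ᵐ[μ] fun a => H a ^ S := fun hH => by
    filter_upwards [hH] with a ha
    rw [← Real.rpow_mul ha, mul_div_cancel₀ _ hr.ne']
  have memLp_rpow : ∀ {H : α → ℝ} {S : ℝ}, 0 ≤ᵐ[μ] H → 0 < S → MemLp H (ENNReal.ofReal S) μ →
      MemLp (fun a => H a ^ r) (ENNReal.ofReal (S / r)) μ := fun hH hS hHm =>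
    (memLp_ofReal_iff_integrable_rpow (div_pos hS hr) (rpow_ae_nonneg r hH)).2 <|
      ((memLp_ofReal_iff_integrable_rpow hS hH).1 hHm).congr (rpow_rpow_div hH).symm
  have holder := integral_mul_le_Lp_mul_Lq_of_nonneg hPQr.holderConjugate_div_div
    (rpow_ae_nonneg r hF) (rpow_ae_nonneg r hG) (memLp_rpow hF hP hFm) (memLp_rpow hG hQ hGm)
  rw [integral_congr_ae (rpow_rpow_div hF), integral_congr_ae (rpow_rpow_div hG),
    one_div_div, one_div_div] at holder
  have hFP : 0 ≤ ∫ a, F a ^ P ∂μ := integral_nonneg_of_ae (rpow_ae_nonneg P hF)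
  have hGQ : 0 ≤ ∫ a, G a ^ Q ∂μ := integral_nonneg_of_ae (rpow_ae_nonneg Q hG)
  calc (∫ a, (F a * G a) ^ r ∂μ) ^ (1 / r) = (∫ a, F a ^ r * G a ^ r ∂μ) ^ (1 / r) := by
        congr 1
        refine integral_congr_ae ?_
        filter_upwards [hF, hG] with a ha hb using Real.mul_rpow ha hb
    _ ≤ ((∫ a, F a ^ P ∂μ) ^ (r / P) * (∫ a, G a ^ Q ∂μ) ^ (r / Q)) ^ (1 / r) := by
        gcongr
        refine integral_nonneg_of_ae ?_
        filter_upwards [hF, hG] with a ha hb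
        exact mul_nonneg (Real.rpow_nonneg ha r) (Real.rpow_nonneg hb r)
    _ = (∫ a, F a ^ P ∂μ) ^ (1 / P) * (∫ a, G a ^ Q ∂μ) ^ (1 / Q) := by
        rw [Real.mul_rpow (by positivity) (by positivity), ← Real.rpow_mul hFP,
          ← Real.rpow_mul hGQ]
        congr 2 <;> field_simp

theorem memLp_mul_ofReal {P Q r : ℝ} (hPQr : P.HolderTriple Q r)
    (hFm : MemLp F (ENNReal.ofReal P) μ) (hGm : MemLp G (ENNReal.ofReal Q) μ) :
    MemLp (fun a => F a * G a) (ENNReal.ofReal r) μ :=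
  haveI := hPQr.ennrealOfReal
  hGm.mul' hFm

theorem Real.HolderConjugate.holderTriple_sq_mul {p q : ℝ} (hpq : p.HolderConjugate q) :
    (p ^ 2).HolderTriple (p * q) p where
  inv_add_inv_eq_inv := by
    rw [show (p ^ 2)⁻¹ + (p * q)⁻¹ = p⁻¹ * (p⁻¹ + q⁻¹) by ring, hpq.inv_add_inv_eq_one, mul_one]
  left_pos := pow_pos hpq.pos 2
  right_pos := mul_pos hpq.pos hpq.symm.pos

theorem Real.HolderConjugate.holderTriple_mul_sq {p q : ℝ} (hpq : p.HolderConjugate q) :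
    (p * q).HolderTriple (q ^ 2) q := by
  simpa only [mul_comm q p] using hpq.symm.holderTriple_sq_mul.symm

section DoubleHolder

variable {A B C D : α → ℝ} {p q : ℝ}

theorem integrable_mul_mul_of_holderConjugate (hpq : p.HolderConjugate q)
    (hA : MemLp A (ENNReal.ofReal (p ^ 2)) μ) (hB : MemLp B (ENNReal.ofReal (p * q)) μ)
    (hC : MemLp C (ENNReal.ofReal (p * q)) μ) (hD : MemLp D (ENNReal.ofReal (q ^ 2)) μ) :
    Integrable (fun a => A a * B a * (C a * D a)) μ := by
  have := memLp_mul_ofReal hpq (memLp_mul_ofReal hpq.holderTriple_sq_mul hA hB)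
    (memLp_mul_ofReal hpq.holderTriple_mul_sq hC hD)
  rwa [ENNReal.ofReal_one, memLp_one_iff_integrable] at this

theorem integral_mul_mul_le_of_holderConjugate (hpq : p.HolderConjugate q)
    (hA₀ : 0 ≤ᵐ[μ] A) (hB₀ : 0 ≤ᵐ[μ] B) (hC₀ : 0 ≤ᵐ[μ] C) (hD₀ : 0 ≤ᵐ[μ] D)
    (hA : MemLp A (ENNReal.ofReal (p ^ 2)) μ) (hB : MemLp B (ENNReal.ofReal (p * q)) μ)
    (hC : MemLp C (ENNReal.ofReal (p * q)) μ) (hD : MemLp D (ENNReal.ofReal (q ^ 2)) μ) :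
    ∫ a, A a * B a * (C a * D a) ∂μ ≤
      (∫ a, A a ^ p ^ 2 ∂μ) ^ (1 / p ^ 2) * (∫ a, B a ^ (p * q) ∂μ) ^ (1 / (p * q)) *
        (∫ a, C a ^ (p * q) ∂μ) ^ (1 / (p * q)) * (∫ a, D a ^ q ^ 2 ∂μ) ^ (1 / q ^ 2) := by
  have hAB₀ : 0 ≤ᵐ[μ] fun a => A a * B a := by
    filter_upwards [hA₀, hB₀] with a ha hb using mul_nonneg ha hb
  have hCD₀ : 0 ≤ᵐ[μ] fun a => C a * D a := by
    filter_upwards [hC₀, hD₀] with a hc hd using mul_nonneg hc hd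
  have hCD_norm : 0 ≤ (∫ a, (C a * D a) ^ q ∂μ) ^ (1 / q) := by
    refine Real.rpow_nonneg (integral_nonneg_of_ae ?_) _
    filter_upwards [hCD₀] with a ha using Real.rpow_nonneg ha q
  have hAB_bound := integral_mul_rpow_le hpq.holderTriple_sq_mul hA₀ hB₀ hA hB
  calc ∫ a, A a * B a * (C a * D a) ∂μ
      ≤ (∫ a, (A a * B a) ^ p ∂μ) ^ (1 / p) * (∫ a, (C a * D a) ^ q ∂μ) ^ (1 / q) :=
        integral_mul_le_Lp_mul_Lq_of_nonneg hpq hAB₀ hCD₀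
          (memLp_mul_ofReal hpq.holderTriple_sq_mul hA hB)
          (memLp_mul_ofReal hpq.holderTriple_mul_sq hC hD)
    _ ≤ ((∫ a, A a ^ p ^ 2 ∂μ) ^ (1 / p ^ 2) * (∫ a, B a ^ (p * q) ∂μ) ^ (1 / (p * q))) *
          ((∫ a, C a ^ (p * q) ∂μ) ^ (1 / (p * q)) * (∫ a, D a ^ q ^ 2 ∂μ) ^ (1 / q ^ 2)) :=
        mul_le_mul hAB_bound (integral_mul_rpow_le hpq.holderTriple_mul_sq hC₀ hD₀ hC hD)
          hCD_norm ((Real.rpow_nonneg (integral_nonneg_of_ae ?_) _).trans hAB_bound)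
    _ = _ := by ring
  filter_upwards [hAB₀] with a ha using Real.rpow_nonneg ha p

end DoubleHolder

end Holder

theorem rpow_mul_rpow_mem_Icc {x y t : ℝ} (hx : 0 < x) (hxy : x ≤ y) (ht : t ∈ Icc (0 : ℝ) 1) :
    x ^ t * y ^ (1 - t) ∈ Icc x y := by
  obtain ⟨ht0, ht1⟩ := ht
  have hsplit : ∀ z : ℝ, 0 < z → z ^ t * z ^ (1 - t) = z := fun z hz => by
    rw [← Real.rpow_add hz, add_sub_cancel, Real.rpow_one]
  constructor
  · calc x = x ^ t * x ^ (1 - t) := (hsplit x hx).symm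
      _ ≤ x ^ t * y ^ (1 - t) := by gcongr
  · calc x ^ t * y ^ (1 - t) ≤ y ^ t * y ^ (1 - t) := by
          gcongr
          exact Real.rpow_nonneg (hx.le.trans hxy) _
      _ = y := hsplit y (hx.trans_le hxy)

def HGeomConvexOn (h : ℝ → ℝ) (I : Set ℝ) (f : ℝ → ℝ) : Prop :=
  ∀ x ∈ I, ∀ y ∈ I, ∀ t ∈ Icc (0 : ℝ) 1, f (x ^ t * y ^ (1 - t)) ≤ f x ^ h t * f y ^ h (1 - t)

theorem HGeomConvexOn.mul_le {I : Set ℝ} {h f g : ℝ → ℝ} (hI : Convex ℝ I)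
    (hf : HGeomConvexOn h I f) (hg : HGeomConvexOn h I g) (hfpos : ∀ z ∈ I, 0 < f z)
    (hgpos : ∀ z ∈ I, 0 < g z) {x y t : ℝ} (hx : x ∈ I) (hy : y ∈ I) (hxpos : 0 < x)
    (hxy : x ≤ y) (ht : t ∈ Icc (0 : ℝ) 1) :
    f (x ^ t * y ^ (1 - t)) * g (x ^ (1 - t) * y ^ t) ≤
      f x ^ h t * g y ^ h t * (f y ^ h (1 - t) * g x ^ h (1 - t)) := by
  have hmem : x ^ (1 - t) * y ^ t ∈ I := by
    have h1t : 1 - t ∈ Icc (0 : ℝ) 1 := ⟨by linarith [ht.2], by linarith [ht.1]⟩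
    simpa only [sub_sub_cancel] using
      hI.ordConnected.out hx hy (rpow_mul_rpow_mem_Icc hxpos hxy h1t)
  have hgt : g (x ^ (1 - t) * y ^ t) ≤ g y ^ h t * g x ^ h (1 - t) := by
    simpa only [mul_comm (y ^ t)] using hg y hy x hx t ht
  calc f (x ^ t * y ^ (1 - t)) * g (x ^ (1 - t) * y ^ t)
      ≤ (f x ^ h t * f y ^ h (1 - t)) * (g y ^ h t * g x ^ h (1 - t)) :=
        mul_le_mul (hf x hx y hy t ht) hgt (hgpos _ hmem).le
          (mul_nonneg (Real.rpow_nonneg (hfpos x hx).le _) (Real.rpow_nonneg (hfpos y hy).le _))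
    _ = f x ^ h t * g y ^ h t * (f y ^ h (1 - t) * g x ^ h (1 - t)) := by ring

theorem h_geom_convex_holder_general
    (I : Set ℝ) (hIconv : Convex ℝ I)
    (h f g : ℝ → ℝ)
    (hf : ∀ x ∈ I, 0 < f x)
    (hg : ∀ x ∈ I, 0 < g x)
    (hgcf : ∀ x ∈ I, ∀ y ∈ I, ∀ t ∈ Icc (0:ℝ) 1,
      f (x ^ t * y ^ (1 - t)) ≤ f x ^ h t * f y ^ h (1 - t))
    (hgcg : ∀ x ∈ I, ∀ y ∈ I, ∀ t ∈ Icc (0:ℝ) 1,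
      g (x ^ t * y ^ (1 - t)) ≤ g x ^ h t * g y ^ h (1 - t))
    (x y : ℝ) (hx : x ∈ I) (hy : y ∈ I) (hxpos : 0 < x) (hxy : x < y)
    (p q : ℝ) (hp : 1 < p) (hpq : 1 / p + 1 / q = 1)
    (hint0 : IntervalIntegrable
      (fun t => f (x ^ t * y ^ (1 - t)) * g (x ^ (1 - t) * y ^ t)) volume 0 1)
    (hint1 : IntervalIntegrable (fun t => f x ^ (p ^ 2 * h t)) volume 0 1)
    (hint2 : IntervalIntegrable (fun t => g y ^ (p * q * h t)) volume 0 1)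
    (hint3 : IntervalIntegrable (fun t => f y ^ (p * q * h (1 - t))) volume 0 1)
    (hint4 : IntervalIntegrable (fun t => g x ^ (q ^ 2 * h (1 - t))) volume 0 1) :
    ∫ t in (0:ℝ)..1, f (x ^ t * y ^ (1 - t)) * g (x ^ (1 - t) * y ^ t) ≤
      (∫ t in (0:ℝ)..1, f x ^ (p ^ 2 * h t)) ^ (1 / p ^ 2) *
      (∫ t in (0:ℝ)..1, g y ^ (p * q * h t)) ^ (1 / (p * q)) *
      (∫ t in (0:ℝ)..1, f y ^ (p * q * h (1 - t))) ^ (1 / (p * q)) *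
      (∫ t in (0:ℝ)..1, g x ^ (q ^ 2 * h (1 - t))) ^ (1 / q ^ 2) := by
  have hconj : p.HolderConjugate q :=
    Real.holderConjugate_iff.2 ⟨hp, by simpa only [one_div] using hpq⟩
  have hfx := hf x hx
  have hfy := hf y hy
  have hgx := hg x hx
  have hgy := hg y hy
  -- write each `c ^ (P * u t)` as `(c ^ u t) ^ P`
  simp_rw [intervalIntegral.integral_of_le zero_le_one, mul_comm (p ^ 2), mul_comm (p * q),
    mul_comm (q ^ 2), Real.rpow_mul hfx.le, Real.rpow_mul hfy.le, Real.rpow_mul hgx.le,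
    Real.rpow_mul hgy.le] at hint1 hint2 hint3 hint4 ⊢
  have rpow_ae_nonneg : ∀ {c : ℝ} (u : ℝ → ℝ), 0 < c →
      0 ≤ᵐ[volume.restrict (Ioc (0 : ℝ) 1)] fun t => c ^ u t :=
    fun u hc => ae_of_all _ fun t => Real.rpow_nonneg hc.le (u t)
  have hp0 := hconj.pos
  have hq0 := hconj.symm.pos
  have hA := (memLp_ofReal_iff_integrable_rpow (by positivity) (rpow_ae_nonneg h hfx)).2 hint1.1
  have hB := (memLp_ofReal_iff_integrable_rpow (by positivity) (rpow_ae_nonneg h hgy)).2 hint2.1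
  have hC := (memLp_ofReal_iff_integrable_rpow (by positivity)
    (rpow_ae_nonneg (fun t => h (1 - t)) hfy)).2 hint3.1
  have hD := (memLp_ofReal_iff_integrable_rpow (by positivity)
    (rpow_ae_nonneg (fun t => h (1 - t)) hgx)).2 hint4.1
  calc ∫ t in Ioc 0 1, f (x ^ t * y ^ (1 - t)) * g (x ^ (1 - t) * y ^ t)
      ≤ ∫ t in Ioc 0 1, f x ^ h t * g y ^ h t * (f y ^ h (1 - t) * g x ^ h (1 - t)) :=
        setIntegral_mono_on hint0.1 (integrable_mul_mul_of_holderConjugate hconj hA hB hC hD)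
          measurableSet_Ioc fun t ht => HGeomConvexOn.mul_le hIconv hgcf hgcg hf hg hx hy hxpos
            hxy.le (Ioc_subset_Icc_self ht)
    _ ≤ _ := integral_mul_mul_le_of_holderConjugate hconj (rpow_ae_nonneg _ hfx)
        (rpow_ae_nonneg _ hgy) (rpow_ae_nonneg _ hfy) (rpow_ae_nonneg _ hgx) hA hB hC hD

/-- Hölder-type inequality for two `h`-geometrically convex functions on an
interval `I ⊂ (0,∞)`. -/
theorem h_geom_convex_holder
    (I : Set ℝ) (hI : I ⊆ Ioi (0:ℝ)) (hIconv : Convex ℝ I)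
    (h f g : ℝ → ℝ)
    (hh : ∀ t ∈ Icc (0:ℝ) 1, 0 ≤ h t)
    (hf : ∀ x ∈ I, 0 < f x)
    (hg : ∀ x ∈ I, 0 < g x)
    (hgcf : ∀ x ∈ I, ∀ y ∈ I, ∀ t ∈ Icc (0:ℝ) 1,
      f (x ^ t * y ^ (1 - t)) ≤ f x ^ h t * f y ^ h (1 - t))
    (hgcg : ∀ x ∈ I, ∀ y ∈ I, ∀ t ∈ Icc (0:ℝ) 1,
      g (x ^ t * y ^ (1 - t)) ≤ g x ^ h t * g y ^ h (1 - t))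
    (x y : ℝ) (hx : x ∈ I) (hy : y ∈ I) (hxpos : 0 < x) (hxy : x < y)
    (p q : ℝ) (hp : 1 < p) (hpq : 1 / p + 1 / q = 1)
    (hint0 : IntervalIntegrable
      (fun t => f (x ^ t * y ^ (1 - t)) * g (x ^ (1 - t) * y ^ t)) volume 0 1)
    (hint1 : IntervalIntegrable (fun t => f x ^ (p ^ 2 * h t)) volume 0 1)
    (hint2 : IntervalIntegrable (fun t => g y ^ (p * q * h t)) volume 0 1)
    (hint3 : IntervalIntegrable (fun t => f y ^ (p * q * h (1 - t))) volume 0 1)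
    (hint4 : IntervalIntegrable (fun t => g x ^ (q ^ 2 * h (1 - t))) volume 0 1) :
    ∫ t in (0:ℝ)..1, f (x ^ t * y ^ (1 - t)) * g (x ^ (1 - t) * y ^ t) ≤
      (∫ t in (0:ℝ)..1, f x ^ (p ^ 2 * h t)) ^ (1 / p ^ 2) *
      (∫ t in (0:ℝ)..1, g y ^ (p * q * h t)) ^ (1 / (p * q)) *
      (∫ t in (0:ℝ)..1, f y ^ (p * q * h (1 - t))) ^ (1 / (p * q)) *
      (∫ t in (0:ℝ)..1, g x ^ (q ^ 2 * h (1 - t))) ^ (1 / q ^ 2) :=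
  h_geom_convex_holder_general I hIconv h f g hf hg hgcf hgcg x y hx hy hxpos hxy p q hp hpq hint0
    hint1 hint2 hint3 hint4
end

section
/- Let I ⊂ (0,∞) be an interval, let h be a nonnegative function on an interval J ⊇ [0,1], and let f : I → (0,∞) be an h-multi convex function, i.e. λ·f(x^t y^{1-t}) + (1-λ)·f(tx+(1-t)y) ≤ [f(x)]^{h(t)}·[f(y)]^{h(1-t)} for all x,y ∈ I and t,λ ∈ [0,1]. Let x, y ∈ I with 0 < x < y, and assume f is integrable on [x,y], γ ↦ f(γ)/γ is integrable on [x,y], and t ↦ [f(x)]^{h(t)}·[f(y)]^{h(1-t)} is integrable on [0,1]. Then (1/2)·[ (1/(ln y − ln x)) ∫_x^y (f(γ)/γ) dγ + (1/(y−x)) ∫_x^y f(γ) dγ ] ≤ ∫_0^1 [f(x)]^{h(t)} · [f(y)]^{h(1-t)} dt. -/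
/-!
Taking `λ = 1` and `λ = 0` in the defining inequality bounds `f` along the geometric path
`t ↦ x ^ t * y ^ (1 - t)` and along the segment `t ↦ t * x + (1 - t) * y` by the same
function of `t`. Integrating over `[0, 1]` and substituting `γ = x ^ t * y ^ (1 - t)`,
resp. `γ = t * x + (1 - t) * y`, turns the two left-hand sides into the two means of the
statement; their average is then bounded as well.
-/

open Set MeasureTheory

theorem Real.rpow_mul_rpow_one_sub_mem_Icc {x y t : ℝ} (hx : 0 < x) (hxy : x ≤ y)
    (ht : t ∈ Icc (0:ℝ) 1) : x ^ t * y ^ (1 - t) ∈ Icc x y := by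
  obtain ⟨ht0, ht1⟩ := ht
  have hy : 0 < y := hx.trans_le hxy
  have h1t : 0 ≤ 1 - t := sub_nonneg.2 ht1
  constructor
  · calc x = x ^ t * x ^ (1 - t) := by rw [← Real.rpow_add hx, add_sub_cancel, Real.rpow_one]
      _ ≤ x ^ t * y ^ (1 - t) := by gcongr
  · calc x ^ t * y ^ (1 - t) ≤ y ^ t * y ^ (1 - t) := by gcongr
      _ = y := by rw [← Real.rpow_add hy, add_sub_cancel, Real.rpow_one]

namespace intervalIntegral

/-- No integrability of `f` is needed: if it fails, `∫ f = 0 ≤ ∫ g`. -/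
theorem integral_mono_on_of_nonneg {f g : ℝ → ℝ} {a b : ℝ} (hab : a ≤ b)
    (hg : IntervalIntegrable g volume a b) (hf : ∀ t ∈ Icc a b, 0 ≤ f t)
    (hfg : ∀ t ∈ Icc a b, f t ≤ g t) :
    ∫ t in a..b, f t ≤ ∫ t in a..b, g t := by
  rw [integral_of_le hab, integral_of_le hab]
  have ae_Ioc {p : ℝ → Prop} (hp : ∀ t ∈ Icc a b, p t) : ∀ᵐ t ∂volume.restrict (Ioc a b), p t :=
    ae_restrict_of_forall_mem measurableSet_Ioc fun t ht => hp t (Ioc_subset_Icc_self ht)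
  exact integral_mono_of_nonneg (ae_Ioc hf) hg.1 (ae_Ioc hfg)

theorem integral_comp_exp (f : ℝ → ℝ) (a b : ℝ) :
    ∫ u in a..b, f (Real.exp u) = ∫ γ in Real.exp a..Real.exp b, f γ / γ := by
  have := integral_comp_mul_deriv_of_deriv_nonneg (a := a) (b := b) (g := fun γ => f γ / γ)
    Real.continuous_exp.continuousOn (fun u _ => Real.hasDerivAt_exp u)
    (fun u _ => (Real.exp_pos u).le)
  simpa only [Function.comp_apply, div_mul_cancel₀ _ (Real.exp_pos _).ne'] using this

theorem integral_unitInterval_comp_convexComb (f : ℝ → ℝ) {a b : ℝ} (hab : a ≠ b) :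
    ∫ t in (0:ℝ)..1, f (t * a + (1 - t) * b) = (b - a)⁻¹ * ∫ u in a..b, f u := by
  have hcomb (t : ℝ) : t * a + (1 - t) * b = (a - b) * t + b := by ring
  simp only [hcomb, integral_comp_mul_add f (sub_ne_zero.2 hab), mul_zero, zero_add, mul_one,
    sub_add_cancel, smul_eq_mul]
  rw [integral_symm, ← neg_sub, inv_neg, neg_mul_neg]

theorem integral_unitInterval_comp_geomComb (f : ℝ → ℝ) {x y : ℝ} (hx : 0 < x) (hy : 0 < y)
    (hxy : x ≠ y) :
    ∫ t in (0:ℝ)..1, f (x ^ t * y ^ (1 - t)) =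
      (Real.log y - Real.log x)⁻¹ * ∫ γ in x..y, f γ / γ := by
  have hcomb (t : ℝ) :
      x ^ t * y ^ (1 - t) = Real.exp (t * Real.log x + (1 - t) * Real.log y) := by
    rw [Real.exp_add, Real.rpow_def_of_pos hx, Real.rpow_def_of_pos hy, mul_comm t,
      mul_comm _ y.log]
  have hlog : Real.log x ≠ Real.log y := fun h => hxy (Real.log_injOn_pos hx hy h)
  simp only [hcomb]
  rw [integral_unitInterval_comp_convexComb (fun u => f (Real.exp u)) hlog, integral_comp_exp,
    Real.exp_log hx, Real.exp_log hy]

end intervalIntegral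

theorem h_multi_convex_hadamard_general
    (I : Set ℝ) (hIconv : Convex ℝ I)
    (h f : ℝ → ℝ)
    (hf : ∀ x ∈ I, 0 < f x)
    (hmc : ∀ x ∈ I, ∀ y ∈ I, ∀ t ∈ Icc (0:ℝ) 1, ∀ lam ∈ Icc (0:ℝ) 1,
      lam * f (x ^ t * y ^ (1 - t)) + (1 - lam) * f (t * x + (1 - t) * y) ≤
        f x ^ h t * f y ^ h (1 - t))
    (x y : ℝ) (hx : x ∈ I) (hy : y ∈ I) (hxpos : 0 < x) (hxy : x < y)
    (hint3 : IntervalIntegrable (fun t => f x ^ h t * f y ^ h (1 - t)) volume 0 1) :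
    (1 / 2) * ((1 / (Real.log y - Real.log x)) * (∫ γ in x..y, f γ / γ) +
        (1 / (y - x)) * ∫ γ in x..y, f γ) ≤
      ∫ t in (0:ℝ)..1, f x ^ h t * f y ^ h (1 - t) := by
  have hf_Icc : ∀ γ ∈ Icc x y, 0 ≤ f γ := fun γ hγ => (hf γ (hIconv.ordConnected.out hx hy hγ)).le
  have hgeom : ∫ t in (0:ℝ)..1, f (x ^ t * y ^ (1 - t)) ≤
      ∫ t in (0:ℝ)..1, f x ^ h t * f y ^ h (1 - t) :=
    intervalIntegral.integral_mono_on_of_nonneg zero_le_one hint3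
      (fun t ht => hf_Icc _ (Real.rpow_mul_rpow_one_sub_mem_Icc hxpos hxy.le ht))
      (fun t ht => by simpa using hmc x hx y hy t ht 1 ⟨zero_le_one, le_rfl⟩)
  have hlin : ∫ t in (0:ℝ)..1, f (t * x + (1 - t) * y) ≤
      ∫ t in (0:ℝ)..1, f x ^ h t * f y ^ h (1 - t) :=
    intervalIntegral.integral_mono_on_of_nonneg zero_le_one hint3
      (fun t ht => (hf _ (hIconv hx hy ht.1 (sub_nonneg.2 ht.2) (add_sub_cancel t 1))).le)
      (fun t ht => by simpa using hmc x hx y hy t ht 0 ⟨le_rfl, zero_le_one⟩)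
  rw [intervalIntegral.integral_unitInterval_comp_geomComb f hxpos (hxpos.trans hxy) hxy.ne]
    at hgeom
  rw [intervalIntegral.integral_unitInterval_comp_convexComb f hxy.ne] at hlin
  simp only [one_div]
  linarith

/-- Hadamard-type inequality for an `h`-multi convex function on an
interval `I ⊂ (0,∞)`. -/
theorem h_multi_convex_hadamard
    (I : Set ℝ) (hI : I ⊆ Ioi (0:ℝ)) (hIconv : Convex ℝ I)
    (h f : ℝ → ℝ)
    (hh : ∀ t ∈ Icc (0:ℝ) 1, 0 ≤ h t)
    (hf : ∀ x ∈ I, 0 < f x)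
    (hmc : ∀ x ∈ I, ∀ y ∈ I, ∀ t ∈ Icc (0:ℝ) 1, ∀ lam ∈ Icc (0:ℝ) 1,
      lam * f (x ^ t * y ^ (1 - t)) + (1 - lam) * f (t * x + (1 - t) * y) ≤
        f x ^ h t * f y ^ h (1 - t))
    (x y : ℝ) (hx : x ∈ I) (hy : y ∈ I) (hxpos : 0 < x) (hxy : x < y)
    (hint1 : IntervalIntegrable f volume x y)
    (hint2 : IntervalIntegrable (fun γ => f γ / γ) volume x y)
    (hint3 : IntervalIntegrable (fun t => f x ^ h t * f y ^ h (1 - t)) volume 0 1) :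
    (1 / 2) * ((1 / (Real.log y - Real.log x)) * (∫ γ in x..y, f γ / γ) +
        (1 / (y - x)) * ∫ γ in x..y, f γ) ≤
      ∫ t in (0:ℝ)..1, f x ^ h t * f y ^ h (1 - t) :=
  h_multi_convex_hadamard_general I hIconv h f hf hmc x y hx hy hxpos hxy hint3
end
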